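/- (Modified Gronwall bound used in the convergence analysis.) Let η : [0,T] → ℝ be continuous and nonnegative, and suppose A η(t)² ≤ ∫₀ᵗ (a(s)η(s) + b(s)) ds for all t ∈ [0,T], where A > 0 and a, b are continuous nonnegative functions. Then η(t) ≤ (1/A)∫₀ᵗ a(s) ds + sup_{s∈[0,t]} √((1/A)∫₀ˢ b(r) dr) for all t ∈ [0,T]. -/

import Mathlib

/-!
Let `t'` be a maximum point of `η` on `[0, t]` and `M = η t'`. Bounding `η` by `M` under the
integral turns the hypothesis at `t'` into the quadratic inequality `M² ≤ C M + B` with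
`C = (1/A)∫₀^{t'} a` and `B = (1/A)∫₀^{t'} b`, whence `M ≤ C + √B`. Finally `C` is monotone in
the upper limit since `a ≥ 0`, and `√B` is one of the values whose supremum is taken.
-/

open MeasureTheory intervalIntegral

open Set

theorem le_add_sqrt_of_sq_le_mul_add {x c d : ℝ} (hc : 0 ≤ c) (h : x ^ 2 ≤ c * x + d) :
    x ≤ c + √d := by
  rcases le_total x c with hxc | hcx
  · linarith [Real.sqrt_nonneg d]
  · have : x - c ≤ √d := Real.le_sqrt_of_sq_le (by nlinarith [mul_nonneg hc (sub_nonneg.2 hcx)])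
    linarith

theorem le_integral_add_sqrt_integral_of_isMaxOn {A t : ℝ} {η a b : ℝ → ℝ} (hA : 0 < A)
    (ht : 0 ≤ t) (hη : ContinuousOn η (Icc 0 t)) (ha : ContinuousOn a (Icc 0 t))
    (hb : ContinuousOn b (Icc 0 t)) (ha_nonneg : ∀ s ∈ Icc 0 t, 0 ≤ a s)
    (hmax : IsMaxOn η (Icc 0 t) t) (h : A * η t ^ 2 ≤ ∫ s in 0..t, (a s * η s + b s)) :
    η t ≤ (1 / A) * (∫ s in 0..t, a s) + √((1 / A) * ∫ s in 0..t, b s) := by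
  have hint : ∀ {f : ℝ → ℝ}, ContinuousOn f (Icc 0 t) → IntervalIntegrable f volume 0 t :=
    fun hf => hf.intervalIntegrable_of_Icc ht
  have hle : A * η t ^ 2 ≤ (∫ s in 0..t, a s) * η t + ∫ s in 0..t, b s :=
    calc A * η t ^ 2 ≤ ∫ s in 0..t, (a s * η s + b s) := h
      _ ≤ ∫ s in 0..t, (a s * η t + b s) :=
        integral_mono_on ht (hint ((ha.mul hη).add hb)) (hint ((ha.mul_const _).add hb))
          fun s hs => by gcongr; exacts [ha_nonneg s hs, hmax hs]
      _ = (∫ s in 0..t, a s) * η t + ∫ s in 0..t, b s := by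
        rw [integral_add ((hint ha).mul_const _) (hint hb), intervalIntegral.integral_mul_const]
  refine le_add_sqrt_of_sq_le_mul_add
    (mul_nonneg (by positivity) (integral_nonneg ht ha_nonneg)) ?_
  calc η t ^ 2 = (1 / A) * (A * η t ^ 2) := by field_simp
    _ ≤ (1 / A) * ((∫ s in 0..t, a s) * η t + ∫ s in 0..t, b s) := by gcongr
    _ = _ := by ring

theorem stmt15_general (T A : ℝ) (hA : 0 < A)
    (η a b : ℝ → ℝ)
    (hη : ContinuousOn η (Set.Icc 0 T))
    (ha : ContinuousOn a (Set.Icc 0 T))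
    (hann : ∀ t ∈ Set.Icc (0 : ℝ) T, 0 ≤ a t)
    (hbc : ContinuousOn b (Set.Icc 0 T))
    (hineq : ∀ t ∈ Set.Icc (0 : ℝ) T,
      A * η t ^ 2 ≤ ∫ s in (0 : ℝ)..t, (a s * η s + b s)) :
    ∀ t ∈ Set.Icc (0 : ℝ) T,
      η t ≤ (1 / A) * (∫ s in (0 : ℝ)..t, a s) +
        sSup ((fun s => Real.sqrt ((1 / A) * ∫ r in (0 : ℝ)..s, b r)) ''
          Set.Icc 0 t) := by
  rintro t ⟨ht, htT⟩
  have hsub : Icc 0 t ⊆ Icc 0 T := Icc_subset_Icc_right htT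
  obtain ⟨t', ht', hmax⟩ := isCompact_Icc.exists_isMaxOn (nonempty_Icc.2 ht) (hη.mono hsub)
  have hsub' : Icc 0 t' ⊆ Icc 0 T := (Icc_subset_Icc_right ht'.2).trans hsub
  have hsqrt : ContinuousOn (fun s => √((1 / A) * ∫ r in 0..s, b r)) (Icc 0 t) := by
    have hprim : ContinuousOn (fun s => ∫ r in 0..s, b r) (Icc 0 t) := by
      rw [← uIcc_of_le ht]
      exact continuousOn_primitive_interval
        (by rw [uIcc_of_le ht]; exact (hbc.mono hsub).integrableOn_Icc)
    exact (continuousOn_const.mul hprim).sqrt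
  calc η t ≤ η t' := hmax ⟨ht, le_rfl⟩
    _ ≤ (1 / A) * (∫ s in 0..t', a s) + √((1 / A) * ∫ s in 0..t', b s) :=
      le_integral_add_sqrt_integral_of_isMaxOn hA ht'.1 (hη.mono hsub') (ha.mono hsub')
        (hbc.mono hsub') (fun s hs => hann s (hsub' hs))
        (hmax.on_subset (Icc_subset_Icc_right ht'.2)) (hineq t' (hsub ht'))
    _ ≤ _ := by
      gcongr _ * ?_ + ?_
      · exact integral_mono_interval le_rfl ht'.1 ht'.2
          ((ae_restrict_iff' measurableSet_Ioc).2 (ae_of_all _ fun s hs =>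
            hann s ⟨hs.1.le, hs.2.trans htT⟩))
          ((ha.mono hsub).intervalIntegrable_of_Icc (μ := volume) ht)
      · exact le_csSup (isCompact_Icc.bddAbove_image hsqrt) ⟨t', ht', rfl⟩

/-- Modified Gronwall bound: if A η(t)² ≤ ∫₀ᵗ (a η + b) for all t ∈ [0,T], with
η continuous nonnegative, A > 0 and a, b continuous nonnegative, then
η(t) ≤ (1/A)∫₀ᵗ a + sup_{s∈[0,t]} √((1/A)∫₀ˢ b). -/
theorem stmt15 (T A : ℝ) (hT : 0 ≤ T) (hA : 0 < A)
    (η a b : ℝ → ℝ)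
    (hη : ContinuousOn η (Set.Icc 0 T))
    (hηnn : ∀ t ∈ Set.Icc (0 : ℝ) T, 0 ≤ η t)
    (ha : ContinuousOn a (Set.Icc 0 T))
    (hann : ∀ t ∈ Set.Icc (0 : ℝ) T, 0 ≤ a t)
    (hbc : ContinuousOn b (Set.Icc 0 T))
    (hbnn : ∀ t ∈ Set.Icc (0 : ℝ) T, 0 ≤ b t)
    (hineq : ∀ t ∈ Set.Icc (0 : ℝ) T,
      A * η t ^ 2 ≤ ∫ s in (0 : ℝ)..t, (a s * η s + b s)) :
    ∀ t ∈ Set.Icc (0 : ℝ) T,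
      η t ≤ (1 / A) * (∫ s in (0 : ℝ)..t, a s) +
        sSup ((fun s => Real.sqrt ((1 / A) * ∫ r in (0 : ℝ)..s, b r)) ''
          Set.Icc 0 t) :=
  stmt15_general T A hA η a b hη ha hann hbc hineq
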